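/- Let ≺ be a strict partial order on the genotypes {0,1}^n (n ≥ 1). Suppose there is a set S of odd genotypes such that the set N(S) = {e even : ∃ o ∈ S, o ≺ e} satisfies |N(S)| < |S|. Then for every real number M there exists a fitness landscape w : {0,1}^n → ℝ strictly respecting ≺ with Σ_{g even} w(g) − Σ_{g odd} w(g) < −M; in particular ≺ does not imply positive n-way epistasis. -/

import Mathlib

/-- Genotypes of an `n`-locus biallelic system. -/
abbrev Genotype (n : ℕ) := Fin n → Bool

/-- The number of coordinates of a genotype equal to 1 (true). -/
def dOnes {n : ℕ} (g : Genotype n) : ℕ :=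
  (Finset.univ.filter (fun i => g i = true)).card

/-- The total `n`-way epistasis of a fitness landscape:
sum of fitnesses over even genotypes minus sum over odd genotypes. -/
noncomputable def epi (n : ℕ) (w : Genotype n → ℝ) : ℝ :=
  ∑ g ∈ Finset.univ.filter (fun g : Genotype n => Even (dOnes g)), w g -
    ∑ g ∈ Finset.univ.filter (fun g : Genotype n => Odd (dOnes g)), w g

/-!
Start from any landscape `w₀` strictly respecting `≺` (e.g. the number of predecessors) and add
a large constant `t` on the up-closure `U` of `S`. Since `U` is an upper set, the new landscape
still respects `≺`, and it changes the epistasis by `t` times (#even genotypes in `U` − #odd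
genotypes in `U`). As `S` is odd, the even part of `U` is exactly `N(S)`, while the odd part
contains `S`; so Hall's violation `|N(S)| < |S|` makes this factor at most `-1`.
-/

open Finset

section StrictOrder

variable {α : Type*} (r : α → α → Prop)

def StrictlyRespects (w : α → ℝ) : Prop := ∀ a b, r a b → w a < w b

def upClosure (S : Set α) : Set α := {b | b ∈ S ∨ ∃ a ∈ S, r a b}

theorem exists_strictlyRespects [Finite α] [IsStrictOrder α r] :
    ∃ w : α → ℝ, StrictlyRespects r w := by
  classical
  have := Fintype.ofFinite α
  refine ⟨fun b => #{a | r a b}, fun a b hab => ?_⟩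
  have hssub : ({x | r x a} : Finset α) ⊂ ({x | r x b} : Finset α) :=
    ssubset_iff_of_subset (fun x hx => by simp_all [_root_.trans (mem_filter.1 hx).2 hab]) |>.mpr
      ⟨a, by simpa using hab, by simpa using irrefl a⟩
  exact Nat.cast_lt.mpr (card_lt_card hssub)

variable {r}

theorem upClosure_mem_of_rel [IsTrans α r] {S : Set α} {a b : α} (hab : r a b)
    (ha : a ∈ upClosure r S) : b ∈ upClosure r S := by
  rcases ha with ha | ⟨o, ho, hoa⟩
  · exact Or.inr ⟨a, ha, hab⟩
  · exact Or.inr ⟨o, ho, _root_.trans hoa hab⟩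

theorem setOf_inter_upClosure {P : α → Prop} {S : Set α} (hS : ∀ a ∈ S, ¬ P a) :
    {b | P b} ∩ upClosure r S = {b | P b ∧ ∃ a ∈ S, r a b} := by
  ext b
  constructor
  · rintro ⟨hb, hbS | hrel⟩
    · exact absurd hb (hS b hbS)
    · exact ⟨hb, hrel⟩
  · rintro ⟨hb, hrel⟩
    exact ⟨hb, Or.inr hrel⟩

theorem StrictlyRespects.add_indicator {w : α → ℝ} (hw : StrictlyRespects r w) {U : Set α}
    (hU : ∀ a b, r a b → a ∈ U → b ∈ U) {t : ℝ} (ht : 0 ≤ t) :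
    StrictlyRespects r (w + U.indicator fun _ => t) := by
  intro a b hab
  have hlt := hw a b hab
  by_cases ha : a ∈ U
  · simp [ha, hU a b hab ha, hlt]
  · have hb : 0 ≤ U.indicator (fun _ => t) b := Set.indicator_nonneg (fun _ _ => ht) b
    simp only [Pi.add_apply, Set.indicator_of_notMem ha, add_zero]
    linarith

end StrictOrder

theorem Finset.sum_indicator_const {α : Type*} (s : Finset α) (U : Set α) (t : ℝ) :
    ∑ a ∈ s, U.indicator (fun _ => t) a = ((↑s ∩ U : Set α).ncard : ℝ) * t := by
  classical
  rw [sum_indicator_eq_sum_filter, sum_const, nsmul_eq_mul, ← Set.ncard_coe_finset, coe_filter]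
  rfl

theorem epi_add_indicator {n : ℕ} (w : Genotype n → ℝ) (U : Set (Genotype n)) (t : ℝ) :
    epi n (w + U.indicator fun _ => t) = epi n w + t *
      ((({g | Even (dOnes g)} ∩ U).ncard : ℝ) - ({g | Odd (dOnes g)} ∩ U).ncard) := by
  simp only [epi, Pi.add_apply, sum_add_distrib, sum_indicator_const, coe_filter, mem_univ,
    true_and]
  ring

theorem hall_violation_gives_negative_epistasis_general
    (n : ℕ)
    (prec : Genotype n → Genotype n → Prop)
    (hpo : IsStrictOrder (Genotype n) prec)
    (S : Set (Genotype n)) (hS : ∀ o ∈ S, Odd (dOnes o))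
    (hN : {e : Genotype n | Even (dOnes e) ∧ ∃ o ∈ S, prec o e}.ncard < S.ncard) :
    (∀ M : ℝ, ∃ w : Genotype n → ℝ,
        (∀ g h, prec g h → w g < w h) ∧ epi n w < -M) ∧
      ¬ (∀ w : Genotype n → ℝ, (∀ g h, prec g h → w g < w h) → 0 < epi n w) := by
  obtain ⟨w₀, hw₀⟩ := exists_strictlyRespects prec
  set U := upClosure prec S
  have hgap : (({g | Even (dOnes g)} ∩ U).ncard : ℝ) - ({g | Odd (dOnes g)} ∩ U).ncard ≤ -1 := by
    have hSodd : S.ncard ≤ ({g | Odd (dOnes g)} ∩ U).ncard :=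
      Set.ncard_le_ncard fun o ho => ⟨hS o ho, Or.inl ho⟩
    rw [setOf_inter_upClosure fun o ho => Nat.not_even_iff_odd.mpr (hS o ho)]
    have hint := Nat.cast_le (α := ℝ).mpr (hN.trans_le hSodd)
    push_cast at hint
    linarith
  have hlow : ∀ M : ℝ, ∃ w, StrictlyRespects prec w ∧ epi n w < -M := by
    intro M
    have ht : 0 ≤ |epi n w₀| + |M| + 1 := by positivity
    refine ⟨w₀ + U.indicator fun _ => |epi n w₀| + |M| + 1,
      hw₀.add_indicator (fun _ _ => upClosure_mem_of_rel) ht, ?_⟩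
    rw [epi_add_indicator]
    nlinarith [le_abs_self (epi n w₀), le_abs_self M]
  exact ⟨hlow, fun hpos => by obtain ⟨w, hw, hneg⟩ := hlow 0; linarith [hpos w hw]⟩

theorem hall_violation_gives_negative_epistasis
    (n : ℕ) (hn : 1 ≤ n)
    (prec : Genotype n → Genotype n → Prop)
    (hpo : IsStrictOrder (Genotype n) prec)
    (S : Set (Genotype n)) (hS : ∀ o ∈ S, Odd (dOnes o))
    (hN : {e : Genotype n | Even (dOnes e) ∧ ∃ o ∈ S, prec o e}.ncard < S.ncard) :
    (∀ M : ℝ, ∃ w : Genotype n → ℝ,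
        (∀ g h, prec g h → w g < w h) ∧ epi n w < -M) ∧
      ¬ (∀ w : Genotype n → ℝ, (∀ g h, prec g h → w g < w h) → 0 < epi n w) :=
  hall_violation_gives_negative_epistasis_general n prec hpo S hS hN
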